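/- Let A ∈ R^{p×d} with AA^T = I_p, and suppose S: R^p → R^p is the gradient of a convex differentiable function φ: R^p → R. Then the spiked map T(x) = x - A^T(Ax - S(Ax)) is the gradient of the convex function Φ(x) = (1/2)‖(I_d - A^T A)x‖² + φ(Ax). -/

import Mathlib

open Matrix

/-- Identity map between `Fin n → ℝ` and its Euclidean-space type synonym. -/
def toE {n : ℕ} (v : Fin n → ℝ) : EuclideanSpace ℝ (Fin n) := WithLp.toLp 2 v

/-- The inverse identity map. -/
def ofE {n : ℕ} (v : EuclideanSpace ℝ (Fin n)) : Fin n → ℝ := v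

/-!
Write `L` for `x ↦ A x`. Since `A Aᵀ = I`, `L` is a coisometry, so `P = I - L† L` is a
self-adjoint idempotent and `Φ x = ½ ‖P x‖² + φ (L x)`. Convexity is inherited from the
convex functions `½ ‖·‖²` and `φ` through the linear maps `P` and `L`, and the chain rule gives
`∇Φ x = P† P x + L† S (L x) = P x + L† S (L x) = x - L† (L x - S (L x))`.
-/

open Set
open scoped InnerProduct

section Gradient

variable {F : Type*} [NormedAddCommGroup F] [InnerProductSpace ℝ F] [CompleteSpace F]

theorem HasGradientAt.add {f g : F → ℝ} {f' g' x : F} (hf : HasGradientAt f f' x)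
    (hg : HasGradientAt g g' x) : HasGradientAt (fun y => f y + g y) (f' + g') x := by
  rw [hasGradientAt_iff_hasFDerivAt] at hf hg ⊢
  rw [map_add]
  exact hf.add hg

theorem hasGradientAt_half_mul_norm_sq (x : F) :
    HasGradientAt (fun y => (1 / 2) * ‖y‖ ^ 2) x x := by
  have hdual : InnerProductSpace.toDual ℝ F x = (1 / 2 : ℝ) • 2 • innerSL ℝ x := by
    ext v
    simp
  rw [hasGradientAt_iff_hasFDerivAt, hdual]
  exact (hasStrictFDerivAt_norm_sq x).hasFDerivAt.const_mul _

variable {E : Type*} [NormedAddCommGroup E] [InnerProductSpace ℝ E] [CompleteSpace E]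

theorem HasGradientAt.comp_continuousLinearMap {φ : F → ℝ} {g : F} (L : E →L[ℝ] F) {x : E}
    (h : HasGradientAt φ g (L x)) : HasGradientAt (fun y => φ (L y)) ((L†) g) x := by
  have hdual : InnerProductSpace.toDual ℝ E ((L†) g) =
      (InnerProductSpace.toDual ℝ F g).comp L := by
    ext v
    simp [ContinuousLinearMap.adjoint_inner_left]
  rw [hasGradientAt_iff_hasFDerivAt, hdual]
  exact (hasGradientAt_iff_hasFDerivAt.mp h).comp x L.hasFDerivAt

end Gradient

section SpikedPotential

variable {E F : Type*} [NormedAddCommGroup E] [InnerProductSpace ℝ E] [CompleteSpace E]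
  [NormedAddCommGroup F] [InnerProductSpace ℝ F] [CompleteSpace F]

theorem ContinuousLinearMap.isIdempotentElem_one_sub_adjoint_comp_self {L : E →L[ℝ] F}
    (hL : L ∘L L† = 1) : IsIdempotentElem (1 - L† ∘L L) := by
  refine IsIdempotentElem.one_sub ?_
  change L† ∘L L ∘L (L† ∘L L) = L† ∘L L
  rw [← comp_assoc L, hL]
  rfl

noncomputable def spikedPotential (L : E →L[ℝ] F) (φ : F → ℝ) (x : E) : ℝ :=
  (1 / 2) * ‖(1 - L† ∘L L) x‖ ^ 2 + φ (L x)

theorem convexOn_spikedPotential (L : E →L[ℝ] F) {φ : F → ℝ} (hφ : ConvexOn ℝ univ φ) :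
    ConvexOn ℝ univ (spikedPotential L φ) := by
  have hsq : ConvexOn ℝ univ (fun y : E => (1 / 2 : ℝ) * ‖y‖ ^ 2) :=
    (convexOn_univ_norm.pow (fun y _ => norm_nonneg y) 2).smul (by norm_num)
  exact (hsq.comp_linearMap (1 - L† ∘L L : E →L[ℝ] E).toLinearMap).add
    (hφ.comp_linearMap L.toLinearMap)

theorem hasGradientAt_spikedPotential {L : E →L[ℝ] F} (hL : L ∘L L† = 1) {φ : F → ℝ}
    {S : F → F} (hS : ∀ y, HasGradientAt φ (S y) y) (x : E) :
    HasGradientAt (spikedPotential L φ) (x - (L†) (L x - S (L x))) x := by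
  set P := 1 - L† ∘L L
  have hP : P† = P := by
    simp [P, ContinuousLinearMap.adjoint_comp, ContinuousLinearMap.adjoint_one]
  have hgrad : (P†) (P x) + (L†) (S (L x)) = x - (L†) (L x - S (L x)) := by
    have hPP : P (P x) = P x :=
      congr($(ContinuousLinearMap.isIdempotentElem_one_sub_adjoint_comp_self hL) x)
    rw [hP, hPP, map_sub]
    change x - (L†) (L x) + _ = _
    abel
  rw [← hgrad]
  exact ((hasGradientAt_half_mul_norm_sq (P x)).comp_continuousLinearMap P).add
    ((hS (L x)).comp_continuousLinearMap L)

end SpikedPotential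

section MatrixAdjoint

variable {𝕜 : Type*} [RCLike 𝕜] {m n : Type*} [Fintype m] [Fintype n] [DecidableEq m]
  [DecidableEq n]

theorem Matrix.adjoint_toContinuousLinearMap_toEuclideanLin (A : Matrix m n 𝕜) :
    (toEuclideanLin A).toContinuousLinearMap† = (toEuclideanLin Aᴴ).toContinuousLinearMap := by
  rw [← LinearMap.adjoint_toContinuousLinearMap, toEuclideanLin_conjTranspose_eq_adjoint]

theorem Matrix.toContinuousLinearMap_toEuclideanLin_comp_adjoint {A : Matrix m n 𝕜}
    (hA : A * Aᴴ = 1) :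
    (toEuclideanLin A).toContinuousLinearMap ∘L (toEuclideanLin A).toContinuousLinearMap† = 1 := by
  ext1 y
  simp [adjoint_toContinuousLinearMap_toEuclideanLin, toLpLin_apply, mulVec_mulVec, hA]

end MatrixAdjoint

/-- If S = ∇φ with φ convex differentiable, then the spiked map
T(x) = x - Aᵀ(Ax - S(Ax)) is the gradient of the convex function
Φ(x) = ½‖(I - AᵀA)x‖² + φ(Ax). -/
theorem stmt_17 {p d : ℕ} (A : Matrix (Fin p) (Fin d) ℝ) (hA : A * Aᵀ = 1)
    (φ : EuclideanSpace ℝ (Fin p) → ℝ) (hφ : ConvexOn ℝ Set.univ φ)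
    (S : EuclideanSpace ℝ (Fin p) → EuclideanSpace ℝ (Fin p))
    (hS : ∀ y, HasGradientAt φ (S y) y) :
    let Φ : EuclideanSpace ℝ (Fin d) → ℝ := fun x =>
      (1 / 2) * (∑ i, ((((1 : Matrix (Fin d) (Fin d) ℝ) - Aᵀ * A).mulVec (ofE x)) i) ^ 2) +
        φ (toE (A.mulVec (ofE x)))
    ConvexOn ℝ Set.univ Φ ∧
    ∀ x : EuclideanSpace ℝ (Fin d),
      HasGradientAt Φ
        (x - toE (Aᵀ.mulVec (A.mulVec (ofE x) - ofE (S (toE (A.mulVec (ofE x))))))) x := by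
  intro Φ
  set L := (toEuclideanLin A).toContinuousLinearMap
  have hAH : Aᴴ = Aᵀ := conjTranspose_eq_transpose_of_trivial A
  have hL : L ∘L L† = 1 := toContinuousLinearMap_toEuclideanLin_comp_adjoint (hAH ▸ hA)
  have hLadj : L† = (toEuclideanLin Aᵀ).toContinuousLinearMap := by
    rw [← hAH, adjoint_toContinuousLinearMap_toEuclideanLin]
  have hΦ : Φ = spikedPotential L φ := by
    funext x
    simp [Φ, spikedPotential, L, hLadj, EuclideanSpace.norm_sq_eq, toLpLin_apply, ofE, toE,
      sub_mulVec, mulVec_mulVec]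
  rw [hΦ]
  refine ⟨convexOn_spikedPotential L hφ, fun x => ?_⟩
  convert hasGradientAt_spikedPotential hL hS x using 2
  rw [hLadj]
  rfl
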